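/- arXiv:1409.6259 — 3 statements merged into one kernel-verified Lean document; each statement's English description precedes it below -/
import Mathlib

section
/- Let Ω be a compact metric space, T a homeomorphism of Ω, and A: Ω → GL(2,ℂ) continuous with |det A(ω)| = 1 for all ω. If (T,A) admits no Sacker–Sell solution, then there exist N ∈ ℤ₊ and ε > 0 such that for every ω ∈ Ω and every unit vector v ∈ ℂ², there exists n with |n| ≤ N and ‖Aⁿ(ω)v‖ > 1 + ε. -/
/-! The sets `{(ω, v) | 1 + 1 / (k + 1) < ‖Aⁿ(ω) v‖}`, indexed by `(n, k) : ℤ × ℕ`, are open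
because the cocycle iterates are continuous, and without Sacker–Sell solutions they cover the
compact space `Ω × S³`. A finite subcover bounds `|n|` by some `N` and `1 / (k + 1)` from below. -/

noncomputable section

abbrev E2 := EuclideanSpace ℂ (Fin 2)
abbrev M2 := Matrix (Fin 2) (Fin 2) ℂ

noncomputable def opNorm (M : M2) : ℝ :=
  ‖Matrix.toEuclideanCLM (𝕜 := ℂ) (n := Fin 2) M‖

noncomputable def mulV (M : M2) (v : E2) : E2 :=
  Matrix.toEuclideanCLM (𝕜 := ℂ) (n := Fin 2) M v

variable {Ω : Type*} [MetricSpace Ω]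

noncomputable def fwd (T : Ω ≃ₜ Ω) (A : Ω → M2) : ℕ → Ω → M2
  | 0, _ => 1
  | n + 1, ω => fwd T A n (T ω) * A ω

noncomputable def coc (T : Ω ≃ₜ Ω) (A : Ω → M2) (n : ℤ) (ω : Ω) : M2 :=
  if 0 ≤ n then fwd T A n.toNat ω
  else (fwd T A (-n).toNat ((⇑T.symm)^[(-n).toNat] ω))⁻¹

theorem exists_uniform_window_of_forall_exists_lt {X : Type*} [TopologicalSpace X]
    [CompactSpace X] {f : ℤ → X → ℝ} (hf : ∀ n, Continuous (f n)) {c : ℝ}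
    (h : ∀ x, ∃ n, c < f n x) :
    ∃ (N : ℕ) (ε : ℝ), 0 < N ∧ 0 < ε ∧ ∀ x, ∃ n : ℤ, |n| ≤ N ∧ c + ε < f n x := by
  obtain ⟨t, ht⟩ := isCompact_univ.elim_finite_subcover
    (fun p : ℤ × ℕ => {x | c + 1 / (p.2 + 1 : ℝ) < f p.1 x})
    (fun p => isOpen_lt continuous_const (hf p.1)) fun x _ => by
      obtain ⟨n, hn⟩ := h x
      obtain ⟨k, hk⟩ := exists_nat_one_div_lt (sub_pos.2 hn)
      exact Set.mem_iUnion.2 ⟨(n, k), by simp only [Set.mem_ofPred_eq]; linarith⟩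
  refine ⟨t.sup (fun p => p.1.natAbs) + 1, 1 / (t.sup (fun p => p.2) + 1 : ℝ), by omega,
    by positivity, fun x => ?_⟩
  obtain ⟨⟨n, k⟩, hp, hx⟩ := Set.mem_iUnion₂.1 (ht (Set.mem_univ x))
  refine ⟨n, ?_, ?_⟩
  · have := Finset.le_sup (f := fun p : ℤ × ℕ => p.1.natAbs) hp
    rw [Int.abs_eq_natAbs]
    omega
  · have hk : k ≤ t.sup (fun p => p.2) := Finset.le_sup (f := fun p : ℤ × ℕ => p.2) hp
    calc c + 1 / (t.sup (fun p => p.2) + 1 : ℝ) ≤ c + 1 / (k + 1) := by gcongr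
      _ < f n x := hx

theorem Continuous.matrix_inv_of_isUnit {X K n : Type*} [TopologicalSpace X] [Field K]
    [TopologicalSpace K] [IsTopologicalDivisionRing K] [Fintype n] [DecidableEq n]
    {A : X → Matrix n n K} (hA : Continuous A) (h : ∀ x, IsUnit (A x)) :
    Continuous fun x => (A x)⁻¹ :=
  continuous_iff_continuousAt.2 fun x =>
    (continuousAt_matrix_inv _ (by
      rw [Ring.inverse_eq_inv']
      exact continuousAt_inv₀ ((Matrix.isUnit_iff_isUnit_det _).1 (h x)).ne_zero)).comp
      hA.continuousAt

theorem continuous_mulV : Continuous fun p : M2 × E2 => mulV p.1 p.2 :=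
  (PiLp.continuous_toLp 2 _).comp
    (continuous_fst.matrix_mulVec ((PiLp.continuous_ofLp 2 _).comp continuous_snd))

section Cocycle

variable (T : Ω ≃ₜ Ω) {A : Ω → M2}

theorem continuous_fwd (hA : Continuous A) (n : ℕ) : Continuous (fwd T A n) := by
  induction n with
  | zero => exact continuous_const
  | succ k ih => exact (ih.comp T.continuous).matrix_mul hA

theorem isUnit_fwd (hinv : ∀ ω, IsUnit (A ω)) (n : ℕ) (ω : Ω) : IsUnit (fwd T A n ω) := by
  induction n generalizing ω with
  | zero => exact isUnit_one
  | succ k ih => exact (ih (T ω)).mul (hinv ω)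

theorem continuous_coc (hA : Continuous A) (hinv : ∀ ω, IsUnit (A ω)) (n : ℤ) :
    Continuous (coc T A n) := by
  unfold coc
  split_ifs
  · exact continuous_fwd T hA _
  · exact ((continuous_fwd T hA _).comp (T.symm.continuous.iterate _)).matrix_inv_of_isUnit
      fun ω => isUnit_fwd T hinv _ _

end Cocycle

theorem no_SackerSell_uniform_general [CompactSpace Ω]
    (T : Ω ≃ₜ Ω) (A : Ω → M2) (hA : Continuous A)
    (hinv : ∀ ω, IsUnit (A ω))
    (hnoss : ∀ (ω : Ω) (v : E2), ‖v‖ = 1 → ∃ n : ℤ, 1 < ‖mulV (coc T A n ω) v‖) :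
    ∃ (N : ℕ) (ε : ℝ), 0 < N ∧ 0 < ε ∧
      ∀ (ω : Ω) (v : E2), ‖v‖ = 1 →
        ∃ n : ℤ, |n| ≤ (N : ℤ) ∧ 1 + ε < ‖mulV (coc T A n ω) v‖ := by
  have hcont (n : ℤ) :
      Continuous fun p : Ω × Metric.sphere (0 : E2) 1 => ‖mulV (coc T A n p.1) p.2‖ :=
    (continuous_mulV.comp (((continuous_coc T hA hinv n).comp continuous_fst).prodMk
      (continuous_subtype_val.comp continuous_snd))).norm
  obtain ⟨N, ε, hN, hε, hwindow⟩ := exists_uniform_window_of_forall_exists_lt hcont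
    fun p => hnoss p.1 p.2 (mem_sphere_zero_iff_norm.1 p.2.2)
  exact ⟨N, ε, hN, hε, fun ω v hv => hwindow (ω, ⟨v, mem_sphere_zero_iff_norm.2 hv⟩)⟩

/-- if the cocycle admits no Sacker–Sell solution, then there are
uniform `N` and `ε > 0` such that every unit vector is expanded by more than
`1 + ε` within time window `|n| ≤ N`. -/
theorem no_SackerSell_uniform [CompactSpace Ω]
    (T : Ω ≃ₜ Ω) (A : Ω → M2) (hA : Continuous A)
    (hinv : ∀ ω, IsUnit (A ω)) (hdet : ∀ ω, ‖(A ω).det‖ = 1)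
    (hnoss : ∀ (ω : Ω) (v : E2), ‖v‖ = 1 → ∃ n : ℤ, 1 < ‖mulV (coc T A n ω) v‖) :
    ∃ (N : ℕ) (ε : ℝ), 0 < N ∧ 0 < ε ∧
      ∀ (ω : Ω) (v : E2), ‖v‖ = 1 →
        ∃ n : ℤ, |n| ≤ (N : ℤ) ∧ 1 + ε < ‖mulV (coc T A n ω) v‖ :=
  no_SackerSell_uniform_general T A hA hinv hnoss

end
end

section
/- Let Ω be a compact metric space, T a homeomorphism, A: Ω → GL(2,ℂ) continuous with |det A(ω)| = 1. Suppose there exist N ∈ ℤ₊ and ε > 0 such that for every ω ∈ Ω and unit vector v ∈ ℂ² there is n with |n| ≤ N and ‖Aⁿ(ω)v‖ > 1 + ε. Then for every ω ∈ Ω and unit vector v, there exists a strictly monotone integer sequence (n_k)_{k≥0} with n₀ = 0, |n_k − n_{k−1}| ≤ N for all k ≥ 1, and ‖A^{n_k}(ω)v‖ > (1+ε)^k for all k ≥ 1. -/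
/-!
Put `f m = ‖A^m(ω) v‖`. Rescaling `A^m(ω) v` to a unit vector based at `T^m ω` and using the
cocycle identity `A^s(T^m ω) A^m(ω) = A^(s+m)(ω)`, the hypothesis says that from every `m ∈ ℤ`
some step `s` with `|s| ≤ N` gives `f (m + s) > (1 + ε) f m`. Iterating these steps from `0` gives
a chain `a_k` with `f (a_k) > (1 + ε)^k`. Since `f` increases along it, the chain is injective, and
an injective chain with bounded steps tends to `+∞` or to `-∞`. Say `+∞`; then from the current
term jump to the term right after the chain's last visit to `(-∞, current term]`: this yields a
strictly increasing subsequence whose gaps are still at most `N`, and the growth of `f` along the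
chain passes to it.
-/

noncomputable section

variable {Ω : Type*} [MetricSpace Ω]

open Filter Function

theorem tendsto_atTop_or_atBot_of_injective_of_abs_sub_le {a : ℕ → ℤ} {N : ℕ}
    (hinj : Injective a) (hstep : ∀ k, |a (k + 1) - a k| ≤ N) :
    Tendsto a atTop atTop ∨ Tendsto a atTop atBot := by
  have hcof : Tendsto a atTop cofinite := Nat.cofinite_eq_atTop ▸ hinj.tendsto_cofinite
  have avoid : ∀ l u : ℤ, ∀ᶠ k in atTop, a k ∉ Set.Icc l u := fun l u =>
    hcof.eventually (Set.finite_Icc l u).compl_mem_cofinite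
  obtain ⟨K, hK⟩ := eventually_atTop.1 (avoid (-N) N)
  -- once outside `[-N, N]`, a step of size at most `N` cannot change the sign
  have hsign : ∀ k ≥ K, (0 < a k ↔ 0 < a K) := by
    intro k hk
    induction k, hk using Nat.le_induction with
    | base => rfl
    | succ k hk ih =>
      have h₁ := hK k hk
      have h₂ := hK (k + 1) (by omega)
      have h₃ := abs_le.1 (hstep k)
      simp only [Set.mem_Icc, not_and_or, not_le] at h₁ h₂
      omega
  have hK₀ := hK K le_rfl
  simp only [Set.mem_Icc, not_and_or, not_le] at hK₀
  rcases lt_or_gt_of_ne (show a K ≠ 0 by omega) with hneg | hpos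
  · refine .inr (tendsto_atBot.2 fun M => ?_)
    filter_upwards [eventually_ge_atTop K, avoid M 0] with k hk hkM
    have := (hsign k hk).not.2 (by omega)
    simp only [Set.mem_Icc, not_and_or, not_le] at hkM
    omega
  · refine .inl (tendsto_atTop.2 fun M => ?_)
    filter_upwards [eventually_ge_atTop K, avoid 0 M] with k hk hkM
    have := (hsign k hk).2 hpos
    simp only [Set.mem_Icc, not_and_or, not_le] at hkM
    omega

theorem exists_strictMono_subseq_of_tendsto_atTop {a : ℕ → ℤ} {N : ℤ}
    (hstep : ∀ k, a (k + 1) ≤ a k + N) (ha : Tendsto a atTop atTop) :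
    ∃ τ : ℕ → ℕ, StrictMono τ ∧ τ 0 = 0 ∧
      ∀ j, a (τ j) < a (τ (j + 1)) ∧ a (τ (j + 1)) ≤ a (τ j) + N := by
  have hbdd : ∀ i, BddAbove {k | a k ≤ a i} := fun i => by
    obtain ⟨K, hK⟩ := eventually_atTop.1 (ha.eventually_gt_atTop (a i))
    exact ⟨K, fun k hk => not_lt.1 fun hlt => (hK k hlt.le).not_ge hk⟩
  let last (i : ℕ) : ℕ := sSup {k | a k ≤ a i}
  have le_last (i : ℕ) : i ≤ last i := le_csSup (hbdd i) (le_refl (a i))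
  have apply_last_le (i : ℕ) : a (last i) ≤ a i := Nat.sSup_mem ⟨i, le_refl (a i)⟩ (hbdd i)
  have lt_apply_last_succ (i : ℕ) : a i < a (last i + 1) :=
    not_le.1 fun h => (le_csSup (hbdd i) h).not_gt (Nat.lt_succ_self _)
  let τ (j : ℕ) : ℕ := Nat.rec 0 (fun _ i => last i + 1) j
  refine ⟨τ, strictMono_nat_of_lt_succ fun j => Nat.lt_succ_of_le (le_last (τ j)), rfl,
    fun j => ⟨lt_apply_last_succ (τ j), ?_⟩⟩
  calc a (τ (j + 1)) = a (last (τ j) + 1) := rfl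
    _ ≤ a (last (τ j)) + N := hstep _
    _ ≤ a (τ j) + N := by linarith [apply_last_le (τ j)]

theorem exists_monotone_subseq_of_injective_of_abs_sub_le {a : ℕ → ℤ} {N : ℕ}
    (hinj : Injective a) (hstep : ∀ k, |a (k + 1) - a k| ≤ N) :
    ∃ τ : ℕ → ℕ, StrictMono τ ∧ τ 0 = 0 ∧ (StrictMono (a ∘ τ) ∨ StrictAnti (a ∘ τ)) ∧
      ∀ j, |a (τ (j + 1)) - a (τ j)| ≤ N := by
  rcases tendsto_atTop_or_atBot_of_injective_of_abs_sub_le hinj hstep with h | h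
  · obtain ⟨τ, hτ, hτ0, hgap⟩ := exists_strictMono_subseq_of_tendsto_atTop (N := N)
      (fun k => by linarith [(abs_le.1 (hstep k)).2]) h
    exact ⟨τ, hτ, hτ0, .inl (strictMono_nat_of_lt_succ fun j => (hgap j).1),
      fun j => abs_le.2 ⟨by linarith [hgap j], by linarith [hgap j]⟩⟩
  · obtain ⟨τ, hτ, hτ0, hgap⟩ := exists_strictMono_subseq_of_tendsto_atTop (a := (- a ·))
      (N := N) (fun k => by linarith [(abs_le.1 (hstep k)).1]) (tendsto_neg_atBot_atTop.comp h)
    exact ⟨τ, hτ, hτ0, .inr (strictAnti_nat_of_succ_lt fun j => neg_lt_neg_iff.1 (hgap j).1),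
      fun j => abs_le.2 ⟨by linarith [hgap j], by linarith [hgap j]⟩⟩

theorem exists_monotone_seq_pow_lt_of_forall_exists_step {f : ℤ → ℝ} {c : ℝ} {N : ℕ}
    (hc : 1 ≤ c) (hf0 : 1 ≤ f 0) (hstep : ∀ m, ∃ s : ℤ, |s| ≤ N ∧ c * f m < f (m + s)) :
    ∃ nk : ℕ → ℤ, (StrictMono nk ∨ StrictAnti nk) ∧ nk 0 = 0 ∧
      ∀ k, 1 ≤ k → |nk k - nk (k - 1)| ≤ N ∧ c ^ k < f (nk k) := by
  choose s hsN hs using hstep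
  let a (k : ℕ) : ℤ := (fun m => m + s m)^[k] 0
  have ha_succ (k : ℕ) : a (k + 1) = a k + s (a k) := iterate_succ_apply' _ _ _
  have pow_le (k : ℕ) : c ^ k ≤ f (a k) := by
    induction k with
    | zero => simpa [a] using hf0
    | succ k ih =>
      rw [ha_succ, pow_succ']
      exact ((mul_le_mul_of_nonneg_left ih (by linarith)).trans_lt (hs (a k))).le
  have pow_lt (k : ℕ) : c ^ (k + 1) < f (a (k + 1)) := by
    rw [ha_succ, pow_succ']
    exact (mul_le_mul_of_nonneg_left (pow_le k) (by linarith)).trans_lt (hs (a k))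
  have hmono : StrictMono (f ∘ a) := strictMono_nat_of_lt_succ fun k => by
    have hpos : 0 ≤ f (a k) := (pow_nonneg (by linarith) k).trans (pow_le k)
    have := hs (a k)
    rw [← ha_succ] at this
    exact (le_mul_of_one_le_left hpos hc).trans_lt this
  obtain ⟨τ, hτ, hτ0, hmono', hgap⟩ := exists_monotone_subseq_of_injective_of_abs_sub_le
    hmono.injective.of_comp fun k => by simpa [ha_succ] using hsN (a k)
  refine ⟨a ∘ τ, hmono', by simp [hτ0, a], fun k hk => ?_⟩
  obtain ⟨j, rfl⟩ : ∃ j, k = j + 1 := ⟨k - 1, by omega⟩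
  obtain ⟨i, hi⟩ : ∃ i, τ (j + 1) = i + 1 :=
    ⟨τ (j + 1) - 1, by have := hτ.le_apply (x := j + 1); omega⟩
  refine ⟨hgap j, ?_⟩
  calc c ^ (j + 1) ≤ c ^ (i + 1) := pow_le_pow_right₀ hc (hi ▸ hτ.le_apply)
    _ < f (a (τ (j + 1))) := hi ▸ pow_lt i

theorem Homeomorph.pow_apply_eq_iterate {X : Type*} [TopologicalSpace X] (T : X ≃ₜ X) (n : ℕ)
    (x : X) : (T ^ n) x = T^[n] x := by
  induction n generalizing x with
  | zero => rfl
  | succ n ih => rw [pow_succ, Homeomorph.mul_apply, ih, iterate_succ_apply]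

theorem Homeomorph.zpow_neg_natCast_apply {X : Type*} [TopologicalSpace X] (T : X ≃ₜ X) (n : ℕ)
    (x : X) : (T ^ (-(n : ℤ))) x = T.symm^[n] x := by
  rw [zpow_neg, zpow_natCast, ← inv_pow, Homeomorph.pow_apply_eq_iterate]
  rfl

section GroupCocycle

variable {G : Type*} [Group G] (T : Ω ≃ₜ Ω) (B : Ω → G)

def fwdGrp : ℕ → Ω → G
  | 0, _ => 1
  | n + 1, ω => fwdGrp n (T ω) * B ω

def cocGrp (n : ℤ) (ω : Ω) : G :=
  if 0 ≤ n then fwdGrp T B n.toNat ω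
  else (fwdGrp T B (-n).toNat (T.symm^[(-n).toNat] ω))⁻¹

theorem fwdGrp_succ' (n : ℕ) (ω : Ω) :
    fwdGrp T B (n + 1) ω = B (T^[n] ω) * fwdGrp T B n ω := by
  induction n generalizing ω with
  | zero => simp [fwdGrp]
  | succ n ih => rw [fwdGrp, ih, fwdGrp, ← iterate_succ_apply, mul_assoc]

theorem cocGrp_zero (ω : Ω) : cocGrp T B 0 ω = 1 := by
  simp [cocGrp, fwdGrp]

theorem cocGrp_natCast (n : ℕ) (ω : Ω) : cocGrp T B n ω = fwdGrp T B n ω := by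
  simp [cocGrp]

theorem cocGrp_neg_natCast (n : ℕ) (ω : Ω) :
    cocGrp T B (-n) ω = (fwdGrp T B n (T.symm^[n] ω))⁻¹ := by
  cases n with
  | zero => simp [cocGrp, fwdGrp]
  | succ n => rw [cocGrp, if_neg (by omega), neg_neg, Int.toNat_natCast]

theorem cocGrp_add_one (k : ℤ) (ω : Ω) :
    cocGrp T B (k + 1) ω = B ((T ^ k) ω) * cocGrp T B k ω := by
  have natCast_add_one (n : ℕ) : cocGrp T B (n + 1) ω = B ((T ^ (n : ℤ)) ω) * cocGrp T B n ω := by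
    rw [← Nat.cast_succ, cocGrp_natCast, cocGrp_natCast, zpow_natCast,
      Homeomorph.pow_apply_eq_iterate, fwdGrp_succ']
  obtain ⟨n, rfl | rfl⟩ := Int.eq_nat_or_neg k
  · exact natCast_add_one n
  cases n with
  | zero => simpa using natCast_add_one 0
  | succ n =>
    rw [show -((n + 1 : ℕ) : ℤ) + 1 = -n by push_cast; ring, cocGrp_neg_natCast,
      cocGrp_neg_natCast, Homeomorph.zpow_neg_natCast_apply, fwdGrp, iterate_succ_apply',
      Homeomorph.apply_symm_apply]
    group

theorem cocGrp_sub_one (k : ℤ) (ω : Ω) :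
    cocGrp T B (k - 1) ω = (B ((T ^ (k - 1)) ω))⁻¹ * cocGrp T B k ω := by
  rw [eq_inv_mul_iff_mul_eq, ← cocGrp_add_one, sub_add_cancel]

theorem cocGrp_add (m n : ℤ) (ω : Ω) :
    cocGrp T B (m + n) ω = cocGrp T B m ((T ^ n) ω) * cocGrp T B n ω := by
  induction m using Int.induction_on with
  | zero => rw [zero_add, cocGrp_zero, one_mul]
  | succ m ih =>
    rw [add_right_comm, cocGrp_add_one, ih, cocGrp_add_one, ← Homeomorph.mul_apply, ← zpow_add,
      mul_assoc]
  | pred m ih =>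
    rw [show -(m : ℤ) - 1 + n = -m + n - 1 by ring, cocGrp_sub_one, ih, cocGrp_sub_one,
      ← Homeomorph.mul_apply, ← zpow_add, show -(m : ℤ) - 1 + n = -m + n - 1 by ring, mul_assoc]

end GroupCocycle

section MatrixCocycle

variable {T : Ω ≃ₜ Ω} {A : Ω → M2}

theorem coe_fwdGrp {B : Ω → M2ˣ} (hB : ∀ ω, (B ω : M2) = A ω) (n : ℕ) (ω : Ω) :
    ((fwdGrp T B n ω : M2ˣ) : M2) = fwd T A n ω := by
  induction n generalizing ω with
  | zero => rfl
  | succ n ih => rw [fwdGrp, fwd, Units.val_mul, ih, hB]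

theorem coe_cocGrp {B : Ω → M2ˣ} (hB : ∀ ω, (B ω : M2) = A ω) (n : ℤ) (ω : Ω) :
    ((cocGrp T B n ω : M2ˣ) : M2) = coc T A n ω := by
  rw [cocGrp, coc]
  split
  · exact coe_fwdGrp hB _ ω
  · rw [Matrix.coe_units_inv, coe_fwdGrp hB]

theorem coc_zero (ω : Ω) : coc T A 0 ω = 1 := by
  simp [coc, fwd]

theorem coc_mul (hinv : ∀ ω, IsUnit (A ω)) (m n : ℤ) (ω : Ω) :
    coc T A m ((T ^ n) ω) * coc T A n ω = coc T A (m + n) ω := by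
  have hB (ω : Ω) : ((hinv ω).unit : M2) = A ω := (hinv ω).unit_spec
  rw [← coe_cocGrp hB, ← coe_cocGrp hB, ← coe_cocGrp hB, ← Units.val_mul, cocGrp_add]

theorem isUnit_coc (hinv : ∀ ω, IsUnit (A ω)) (n : ℤ) (ω : Ω) : IsUnit (coc T A n ω) :=
  coe_cocGrp (fun ω => (hinv ω).unit_spec) n ω ▸ Units.isUnit _

end MatrixCocycle

theorem mulV_mul (M M' : M2) (v : E2) : mulV (M * M') v = mulV M (mulV M' v) := by
  simp [mulV, map_mul]

theorem mulV_one (v : E2) : mulV 1 v = v := by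
  simp [mulV, map_one]

theorem mulV_ne_zero {M : M2} (hM : IsUnit M) {v : E2} (hv : v ≠ 0) : mulV M v ≠ 0 := by
  intro h
  apply hv
  rw [← mulV_one v, ← Matrix.nonsing_inv_mul M ((Matrix.isUnit_iff_isUnit_det M).1 hM), mulV_mul,
    h]
  simp [mulV]

theorem exists_mul_norm_lt_norm_apply {𝕜 E F ι : Type*} [RCLike 𝕜] [NormedAddCommGroup E]
    [NormedSpace 𝕜 E] [SeminormedAddCommGroup F] [NormedSpace 𝕜 F] (L : ι → E →L[𝕜] F)
    {p : ι → Prop} {c : ℝ} (h : ∀ v, ‖v‖ = 1 → ∃ i, p i ∧ c < ‖L i v‖) {w : E} (hw : w ≠ 0) :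
    ∃ i, p i ∧ c * ‖w‖ < ‖L i w‖ := by
  obtain ⟨i, hi, hlt⟩ := h _ (norm_smul_inv_norm (𝕜 := 𝕜) hw)
  refine ⟨i, hi, ?_⟩
  rwa [map_smul, norm_smul, norm_inv, RCLike.norm_ofReal, abs_norm,
    lt_inv_mul_iff₀ (norm_pos_iff.2 hw), mul_comm] at hlt

theorem monotone_growth_sequence_general
    (T : Ω ≃ₜ Ω) (A : Ω → M2)
    (hinv : ∀ ω, IsUnit (A ω))
    (N : ℕ) (ε : ℝ) (hε : 0 < ε)
    (hexp : ∀ (ω : Ω) (v : E2), ‖v‖ = 1 →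
      ∃ n : ℤ, |n| ≤ (N : ℤ) ∧ 1 + ε < ‖mulV (coc T A n ω) v‖) :
    ∀ (ω : Ω) (v : E2), ‖v‖ = 1 →
      ∃ nk : ℕ → ℤ, (StrictMono nk ∨ StrictAnti nk) ∧ nk 0 = 0 ∧
        ∀ k : ℕ, 1 ≤ k →
          |nk k - nk (k - 1)| ≤ (N : ℤ) ∧
          (1 + ε) ^ k < ‖mulV (coc T A (nk k) ω) v‖ := by
  intro ω v hv
  have hv0 : v ≠ 0 := norm_ne_zero_iff.1 (hv ▸ one_ne_zero)
  have step (m : ℤ) : ∃ s : ℤ, |s| ≤ N ∧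
      (1 + ε) * ‖mulV (coc T A m ω) v‖ < ‖mulV (coc T A (m + s) ω) v‖ := by
    obtain ⟨s, hs, hlt⟩ := exists_mul_norm_lt_norm_apply
      (fun s => Matrix.toEuclideanCLM (𝕜 := ℂ) (n := Fin 2) (coc T A s ((T ^ m) ω)))
      (hexp ((T ^ m) ω)) (mulV_ne_zero (isUnit_coc hinv m ω) hv0)
    refine ⟨s, hs, ?_⟩
    rwa [← mulV, ← mulV_mul, coc_mul hinv, add_comm s m] at hlt
  exact exists_monotone_seq_pow_lt_of_forall_exists_step (by linarith)
    (by simp [coc_zero, mulV_one, hv]) step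

/-- under the uniform window-expansion property, every unit vector
admits a strictly monotone integer sequence `n_k` with `n₀ = 0`, steps of size
at most `N`, along which the cocycle grows like `(1+ε)^k`. -/
theorem monotone_growth_sequence [CompactSpace Ω]
    (T : Ω ≃ₜ Ω) (A : Ω → M2) (hA : Continuous A)
    (hinv : ∀ ω, IsUnit (A ω)) (hdet : ∀ ω, ‖(A ω).det‖ = 1)
    (N : ℕ) (hN : 0 < N) (ε : ℝ) (hε : 0 < ε)
    (hexp : ∀ (ω : Ω) (v : E2), ‖v‖ = 1 →
      ∃ n : ℤ, |n| ≤ (N : ℤ) ∧ 1 + ε < ‖mulV (coc T A n ω) v‖) :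
    ∀ (ω : Ω) (v : E2), ‖v‖ = 1 →
      ∃ nk : ℕ → ℤ, (StrictMono nk ∨ StrictAnti nk) ∧ nk 0 = 0 ∧
        ∀ k : ℕ, 1 ≤ k →
          |nk k - nk (k - 1)| ≤ (N : ℤ) ∧
          (1 + ε) ^ k < ‖mulV (coc T A (nk k) ω) v‖ :=
  monotone_growth_sequence_general T A hinv N ε hε hexp

end
end

section
/- Let Ω be a compact metric space, T a homeomorphism, f: Ω → 𝔻 continuous, and z ∈ ∂𝔻. Define the Szegő cocycle A_z(ω) = S(f(ω),z) and the Gesztesy–Zinchenko cocycle G_z(ω) = Q(f(Tω),z)·P(f(ω),z). Then (T, A_z) is uniformly hyperbolic if and only if (T², G_z) is uniformly hyperbolic. -/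
noncomputable section

variable {Ω : Type*} [MetricSpace Ω]

/-- `ρ_α = (1 − |α|²)^{1/2}`, as a complex number. -/
noncomputable def rho (α : ℂ) : ℂ := ((Real.sqrt (1 - ‖α‖ ^ 2) : ℝ) : ℂ)

/-- The Szegő transfer matrix `S(α,z)`. -/
noncomputable def Smat (α z : ℂ) : M2 :=
  (rho α)⁻¹ • !![z, -(starRingEnd ℂ) α; -α * z, 1]

/-- The Gesztesy–Zinchenko matrix `P(α,z)`. -/
noncomputable def Pmat (α z : ℂ) : M2 :=
  (rho α)⁻¹ • !![-α, z⁻¹; z, -(starRingEnd ℂ) α]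

/-- The Gesztesy–Zinchenko matrix `Q(α,z)`. -/
noncomputable def Qmat (α z : ℂ) : M2 :=
  (rho α)⁻¹ • !![-(starRingEnd ℂ) α, 1; 1, -α]

/-- Uniform hyperbolicity as uniform exponential growth of the cocycle. -/
def UnifHyp (T : Ω ≃ₜ Ω) (A : Ω → M2) : Prop :=
  ∃ (C : ℝ) (lam : ℝ), 0 < C ∧ 1 < lam ∧
    ∀ (n : ℤ) (ω : Ω), C * lam ^ n.natAbs ≤ opNorm (coc T A n ω)

/-!
By `S(α,z) S(β,z) = z Q(α,z) P(β,z)`, the `n`-th iterate of the Gesztesy–Zinchenko cocycle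
over `T²` is `z⁻ⁿ` times the `2n`-th iterate of the Szegő cocycle, so for `|z| = 1` their norms
agree. Exponential growth at even times is equivalent to exponential growth at all times, since
one step of the Szegő cocycle changes the norm by at most a bounded factor: the Szegő matrices
and their inverses are continuous on the compact space `Ω`, hence uniformly bounded.
-/

lemma opNorm_smul (c : ℂ) (M : M2) : opNorm (c • M) = ‖c‖ * opNorm M := by
  rw [opNorm, map_smul, norm_smul, opNorm]

lemma opNorm_mul_le (M N : M2) : opNorm (M * N) ≤ opNorm M * opNorm N := by
  rw [opNorm, map_mul]
  exact norm_mul_le _ _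

lemma continuous_opNorm : Continuous opNorm :=
  (LinearMap.continuous_of_finiteDimensional
    (Matrix.toEuclideanCLM (𝕜 := ℂ) (n := Fin 2)).toAlgEquiv.toLinearMap).norm

lemma Matrix.inv_smul_of_ne_zero {n K : Type*} [Fintype n] [DecidableEq n] [Field K]
    {c : K} (hc : c ≠ 0) (M : Matrix n n K) : (c • M)⁻¹ = c⁻¹ • M⁻¹ := by
  by_cases hM : IsUnit M.det
  · simpa [Units.smul_def] using Matrix.inv_smul' (A := M) (Units.mk0 c hc) hM
  · have hcM : ¬IsUnit (c • M).det := by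
      rwa [Matrix.det_smul, IsUnit.mul_iff, not_and_or, or_iff_right (by simp [hc])]
    rw [Matrix.nonsing_inv_apply_not_isUnit _ hM, Matrix.nonsing_inv_apply_not_isUnit _ hcM,
      smul_zero]

lemma continuous_inv_of_det_ne_zero {A : Ω → M2} (hA : Continuous A)
    (hdet : ∀ x, (A x).det ≠ 0) : Continuous fun x => (A x)⁻¹ := by
  simp only [Matrix.inv_def, Ring.inverse_eq_inv']
  exact (hA.matrix_det.inv₀ hdet).smul hA.matrix_adjugate

lemma exists_opNorm_le_of_continuous [CompactSpace Ω] {A : Ω → M2} (hA : Continuous A)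
    (hdet : ∀ x, (A x).det ≠ 0) :
    ∃ M : ℝ, 1 ≤ M ∧ ∀ x, opNorm (A x) ≤ M ∧ opNorm (A x)⁻¹ ≤ M := by
  obtain ⟨M₁, hM₁⟩ := (isCompact_range (continuous_opNorm.comp hA)).bddAbove
  obtain ⟨M₂, hM₂⟩ :=
    (isCompact_range (continuous_opNorm.comp (continuous_inv_of_det_ne_zero hA hdet))).bddAbove
  refine ⟨max 1 (max M₁ M₂), le_max_left _ _, fun x => ⟨?_, ?_⟩⟩
  · exact (hM₁ ⟨x, rfl⟩).trans (le_max_of_le_right (le_max_left _ _))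
  · exact (hM₂ ⟨x, rfl⟩).trans (le_max_of_le_right (le_max_right _ _))

section Cocycle

variable (T : Ω ≃ₜ Ω) (A : Ω → M2)

lemma fwd_succ' (n : ℕ) (ω : Ω) : fwd T A (n + 1) ω = A (T^[n] ω) * fwd T A n ω := by
  induction n generalizing ω with
  | zero => simp [fwd]
  | succ n ih => rw [fwd, ih, fwd, Function.iterate_succ_apply, mul_assoc]

lemma coc_natCast (n : ℕ) (ω : Ω) : coc T A n ω = fwd T A n ω := by
  simp [coc]

lemma coc_neg_natCast (n : ℕ) (ω : Ω) :
    coc T A (-n) ω = (fwd T A n (T.symm^[n] ω))⁻¹ := by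
  rcases n.eq_zero_or_pos with rfl | hn
  · simp [coc, fwd]
  · simp [coc, hn.ne']

lemma coc_neg_succ (n : ℕ) (ω : Ω) :
    coc T A (-(n + 1 : ℕ)) ω = (A (T.symm^[n + 1] ω))⁻¹ * coc T A (-n) ω := by
  rw [coc_neg_natCast, coc_neg_natCast, fwd, Matrix.mul_inv_rev,
    Function.iterate_succ_apply', T.apply_symm_apply]

variable {T A}

lemma opNorm_coc_succ_le {M : ℝ} (hA : ∀ x, opNorm (A x) ≤ M) (n : ℕ) (ω : Ω) :
    opNorm (coc T A (n + 1 : ℕ) ω) ≤ M * opNorm (coc T A n ω) := by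
  rw [coc_natCast, coc_natCast, fwd_succ']
  exact (opNorm_mul_le _ _).trans (mul_le_mul_of_nonneg_right (hA _) (norm_nonneg _))

lemma opNorm_coc_neg_succ_le {M : ℝ} (hA : ∀ x, opNorm (A x)⁻¹ ≤ M) (n : ℕ) (ω : Ω) :
    opNorm (coc T A (-(n + 1 : ℕ)) ω) ≤ M * opNorm (coc T A (-n) ω) := by
  rw [coc_neg_succ]
  exact (opNorm_mul_le _ _).trans (mul_le_mul_of_nonneg_right (hA _) (norm_nonneg _))

end Cocycle

section TwoStep

variable {T : Ω ≃ₜ Ω} {A B : Ω → M2} {c : ℂ}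

lemma fwd_two_mul (hAB : ∀ ω, A (T ω) * A ω = c • B ω) (n : ℕ) (ω : Ω) :
    fwd T A (2 * n) ω = c ^ n • fwd (T.trans T) B n ω := by
  induction n generalizing ω with
  | zero => simp [fwd]
  | succ n ih =>
    rw [Nat.mul_succ, fwd, fwd, mul_assoc, hAB, fwd, ih, Homeomorph.trans_apply,
      smul_mul_smul_comm, pow_succ]

lemma coc_two_mul (hc : c ≠ 0) (hAB : ∀ ω, A (T ω) * A ω = c • B ω) (n : ℤ) (ω : Ω) :
    coc T A (2 * n) ω = c ^ n • coc (T.trans T) B n ω := by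
  obtain ⟨m, rfl | rfl⟩ := n.eq_nat_or_neg
  · rw [← Nat.cast_ofNat, ← Nat.cast_mul, coc_natCast, coc_natCast, fwd_two_mul hAB, zpow_natCast]
  · have hiter : T.symm^[2 * m] = (T.trans T).symm^[m] := Function.iterate_mul _ 2 m
    rw [mul_neg, ← Nat.cast_ofNat, ← Nat.cast_mul, coc_neg_natCast, coc_neg_natCast, hiter,
      fwd_two_mul hAB, Matrix.inv_smul_of_ne_zero (pow_ne_zero m hc), zpow_neg, zpow_natCast]

lemma opNorm_coc_two_mul (hc : ‖c‖ = 1) (hAB : ∀ ω, A (T ω) * A ω = c • B ω) (n : ℤ) (ω : Ω) :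
    opNorm (coc (T.trans T) B n ω) = opNorm (coc T A (2 * n) ω) := by
  rw [coc_two_mul (norm_ne_zero_iff.mp (hc ▸ one_ne_zero)) hAB, opNorm_smul, norm_zpow, hc,
    one_zpow, one_mul]

end TwoStep

section EvenTimes

variable {T : Ω ≃ₜ Ω} {A : Ω → M2} {M : ℝ}

lemma exists_opNorm_coc_two_mul_le (hM : 1 ≤ M)
    (hA : ∀ x, opNorm (A x) ≤ M ∧ opNorm (A x)⁻¹ ≤ M) (n : ℤ) (ω : Ω) :
    ∃ m : ℤ, n.natAbs ≤ 2 * m.natAbs ∧ opNorm (coc T A (2 * m) ω) ≤ M * opNorm (coc T A n ω) := by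
  have hself : opNorm (coc T A n ω) ≤ M * opNorm (coc T A n ω) :=
    le_mul_of_one_le_left (norm_nonneg _) hM
  obtain ⟨k, rfl | rfl⟩ := n.eq_nat_or_neg <;> obtain ⟨j, rfl | rfl⟩ := k.even_or_odd'
  · exact ⟨j, by omega, by push_cast; exact hself⟩
  · refine ⟨(j + 1 : ℕ), by omega, ?_⟩
    convert opNorm_coc_succ_le (T := T) (fun x => (hA x).1) (2 * j + 1) ω using 4
    push_cast; ring
  · exact ⟨-j, by omega, by push_cast; rwa [mul_neg]⟩
  · refine ⟨-(j + 1 : ℕ), by omega, ?_⟩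
    convert opNorm_coc_neg_succ_le (T := T) (fun x => (hA x).2) (2 * j + 1) ω using 4
    push_cast; ring

lemma unifHyp_iff_of_opNorm_coc_eq {S : Ω ≃ₜ Ω} {B : Ω → M2} (hM : 1 ≤ M)
    (hA : ∀ x, opNorm (A x) ≤ M ∧ opNorm (A x)⁻¹ ≤ M)
    (hAB : ∀ n ω, opNorm (coc S B n ω) = opNorm (coc T A (2 * n) ω)) :
    UnifHyp T A ↔ UnifHyp S B := by
  constructor
  · rintro ⟨C, lam, hC, hlam, hgrowth⟩
    refine ⟨C, lam ^ 2, hC, one_lt_pow₀ hlam two_ne_zero, fun n ω => ?_⟩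
    simpa [hAB, Int.natAbs_mul, pow_mul] using hgrowth (2 * n) ω
  · rintro ⟨C, lam, hC, hlam, hgrowth⟩
    have hM0 : 0 < M := one_pos.trans_le hM
    refine ⟨C / M, √lam, div_pos hC hM0, Real.lt_sqrt_of_sq_lt (by simpa using hlam),
      fun n ω => ?_⟩
    obtain ⟨m, hnm, hm⟩ := exists_opNorm_coc_two_mul_le (T := T) hM hA n ω
    rw [div_mul_eq_mul_div, div_le_iff₀ hM0, mul_comm _ M]
    calc C * √lam ^ n.natAbs
        ≤ C * √lam ^ (2 * m.natAbs) := by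
          gcongr
          exact Real.one_le_sqrt.mpr hlam.le
      _ = C * lam ^ m.natAbs := by rw [pow_mul, Real.sq_sqrt (by linarith)]
      _ ≤ opNorm (coc T A (2 * m) ω) := by rw [← hAB]; exact hgrowth m ω
      _ ≤ M * opNorm (coc T A n ω) := hm

end EvenTimes

lemma rho_ne_zero {α : ℂ} (hα : ‖α‖ < 1) : rho α ≠ 0 := by
  rw [rho, Complex.ofReal_ne_zero, Real.sqrt_ne_zero']
  nlinarith [norm_nonneg α]

lemma rho_mul_self {α : ℂ} (hα : ‖α‖ < 1) :
    rho α * rho α = 1 - (starRingEnd ℂ) α * α := by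
  rw [rho, ← Complex.ofReal_mul, Real.mul_self_sqrt (by nlinarith [norm_nonneg α]),
    mul_comm _ α, Complex.mul_conj, Complex.normSq_eq_norm_sq]
  push_cast; ring

lemma Smat_mul_Smat (α β : ℂ) {z : ℂ} (hz : z ≠ 0) :
    Smat α z * Smat β z = z • (Qmat α z * Pmat β z) := by
  simp only [Smat, Qmat, Pmat, Matrix.smul_mul, Matrix.mul_smul, smul_smul, Matrix.mul_fin_two]
  rw [mul_comm z ((rho β)⁻¹ * (rho α)⁻¹), ← smul_smul _ z]
  refine congrArg (_ • ·) ?_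
  ext i j
  fin_cases i <;> fin_cases j <;>
    simp only [Fin.zero_eta, Fin.mk_one, Fin.isValue, Matrix.of_apply, Matrix.cons_val',
      Matrix.cons_val_zero, Matrix.cons_val_one, Matrix.cons_val_fin_one, Matrix.smul_apply,
      smul_eq_mul] <;>
    field_simp <;> ring

lemma det_Smat {α : ℂ} (hα : ‖α‖ < 1) (z : ℂ) : (Smat α z).det = z := by
  have hρ := rho_ne_zero hα
  simp only [Smat, Matrix.det_smul, Matrix.det_fin_two_of, Fintype.card_fin]
  field_simp
  linear_combination (-z) * rho_mul_self hα

lemma continuous_Smat {f : Ω → ℂ} (hf : Continuous f) (hfD : ∀ ω, ‖f ω‖ < 1) (z : ℂ) :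
    Continuous fun ω => Smat (f ω) z := by
  have hρ : Continuous fun ω => (rho (f ω))⁻¹ := by
    refine Continuous.inv₀ ?_ fun ω => rho_ne_zero (hfD ω)
    unfold rho; fun_prop
  unfold Smat; fun_prop

/-- the Szegő cocycle `(T, A_z)`, `A_z(ω) = S(f(ω),z)`, is
uniformly hyperbolic iff the Gesztesy–Zinchenko cocycle `(T², G_z)`,
`G_z(ω) = Q(f(Tω),z) P(f(ω),z)`, is uniformly hyperbolic. -/
theorem szego_UH_iff_GZ_UH [CompactSpace Ω]
    (T : Ω ≃ₜ Ω) (f : Ω → ℂ) (hf : Continuous f)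
    (hfD : ∀ ω, ‖f ω‖ < 1)
    (z : ℂ) (hz : ‖z‖ = 1) :
    UnifHyp T (fun ω => Smat (f ω) z) ↔
      UnifHyp (T.trans T) (fun ω => Qmat (f (T ω)) z * Pmat (f ω) z) := by
  have hz0 : z ≠ 0 := norm_ne_zero_iff.mp (hz ▸ one_ne_zero)
  obtain ⟨M, hM, hbound⟩ := exists_opNorm_le_of_continuous (continuous_Smat hf hfD z)
    fun ω => (det_Smat (hfD ω) z).symm ▸ hz0
  exact unifHyp_iff_of_opNorm_coc_eq hM hbound
    (opNorm_coc_two_mul hz fun ω => Smat_mul_Smat _ _ hz0)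

end
end
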